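/- arXiv:1007.1927 — 2 statements merged into one kernel-verified Lean document; each statement's English description precedes it below -/
import Mathlib

section
/- Let {q_n}_{n≥0} be a sequence of positive integers with q_n ≥ 8 for all n, and set b_n = q_0·q_1···q_n. Then the set X = {0} ∪ {±(1/b_n mod 1) | n ∈ ℕ} is quasi-convex in T = R/Z, i.e., X = X^▷◁. -/
open Filter Topology

noncomputable section

abbrev 𝕋 := AddCircle (1 : ℝ)

/-- `T₊ = π([-1/4, 1/4]) ⊆ 𝕋`. -/
def Tplus : Set 𝕋 := {x | ∃ r : ℝ, |r| ≤ 1/4 ∧ (r : 𝕋) = x}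

/-- The polar `E^▷`: continuous characters mapping `E` into `T₊`. -/
def polar (G : Type*) [AddCommGroup G] [TopologicalSpace G] (E : Set G) :
    Set (G →+ 𝕋) := {χ | Continuous χ ∧ ∀ x ∈ E, χ x ∈ Tplus}

/-- The quasi-convex hull `Q_G(E) = E^▷◁`. -/
def qcHull (G : Type*) [AddCommGroup G] [TopologicalSpace G] (E : Set G) : Set G :=
  {x | ∀ χ ∈ polar G E, χ x ∈ Tplus}

/-- The set `S = {0} ∪ {± x_n | n ∈ ℕ}` associated to a sequence. -/
def seqSet {G : Type*} [AddCommGroup G] (x : ℕ → G) : Set G :=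
  {0} ∪ {y | ∃ n, y = x n ∨ y = - x n}

/-- `X = {0} ∪ {±(1/b_n mod 1) | n ∈ ℕ} ⊆ 𝕋`. -/
def Xset (b : ℕ → ℕ) : Set 𝕋 :=
  {0} ∪ {x | ∃ n, x = (((b n : ℝ)⁻¹ : ℝ) : 𝕋) ∨ x = -(((b n : ℝ)⁻¹ : ℝ) : 𝕋)}

/-! Let `x = r mod 1` lie in the quasi-convex hull, `N k = q 0 ⋯ q (k-1)`, and let `θ k` be the
lift of `N k • x` to `[-1/2, 1/2]`. The characters `c N k` with `4c ≤ q k` lie in `X^▷`, which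
forces `|θ k| ≤ 1/8` and `q k |θ k| ≤ 11/8`; hence `q k θ k = θ (k+1) + d k` with an integer
digit `d k ∈ {-1, 0, 1}`. Two nonzero digits would yield a character of `X^▷` moving `x` out of
`T₊`, and if all digits from `K` on vanish then `θ` grows geometrically from `K`, so `θ K = 0`.
Thus either every digit vanishes and `x = 0`, or exactly one `d i = ±1` is nonzero and
`x = ±1 / N (i+1) = ±1 / b i`. -/

namespace AddCircle

lemma exists_coe_eq_and_abs_eq_norm {p : ℝ} (x : AddCircle p) :
    ∃ r : ℝ, (r : AddCircle p) = x ∧ |r| = ‖x‖ := by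
  obtain ⟨r, rfl⟩ := QuotientAddGroup.mk_surjective x
  refine ⟨r - round (p⁻¹ * r) * p, ?_, (norm_eq p).symm⟩
  rw [coe_sub, sub_eq_self, coe_eq_zero_iff]
  exact ⟨round (p⁻¹ * r), zsmul_eq_mul _ _⟩

variable {p : ℝ} [hp : Fact (0 < p)]

lemma norm_nsmul_eq_mul_norm {x : AddCircle p} {n : ℕ} (h : n * ‖x‖ ≤ p / 2) :
    ‖n • x‖ = n * ‖x‖ := by
  obtain ⟨r, rfl, hr⟩ := exists_coe_eq_and_abs_eq_norm x
  rw [← coe_nsmul, nsmul_eq_mul, (norm_coe_eq_abs_iff p hp.out.ne').2, abs_mul, Nat.abs_cast, hr]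
  rwa [abs_mul, Nat.abs_cast, hr, abs_of_pos hp.out]

lemma mul_norm_le_of_forall_norm_nsmul_le {x : AddCircle p} {C : ℕ}
    (h : ∀ c, 1 ≤ c → c ≤ C → ‖c • x‖ ≤ p / 4) : C * ‖x‖ ≤ p / 4 := by
  induction C with
  | zero => simp only [Nat.cast_zero, zero_mul]; linarith [hp.out]
  | succ C ih =>
    have hx : ‖x‖ ≤ p / 4 := by simpa using h 1 le_rfl (by omega)
    have hC : C * ‖x‖ ≤ p / 4 := ih fun c hc1 _ => h c hc1 (by omega)
    rw [← norm_nsmul_eq_mul_norm (by push_cast; linarith)]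
    exact h _ (by omega) le_rfl

end AddCircle

lemma coe_intCast_eq_zero (z : ℤ) : ((z : ℝ) : 𝕋) = 0 :=
  (AddCircle.coe_eq_zero_iff 1).2 ⟨z, by simp⟩

lemma mem_Tplus_iff_norm_le {x : 𝕋} : x ∈ Tplus ↔ ‖x‖ ≤ 1 / 4 := by
  constructor
  · rintro ⟨r, hr, rfl⟩
    exact (QuotientAddGroup.norm_mk_le_norm).trans hr
  · intro h
    obtain ⟨r, rfl, hr⟩ := AddCircle.exists_coe_eq_and_abs_eq_norm x
    exact ⟨r, hr ▸ h, rfl⟩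

lemma quarter_lt_norm_coe {s : ℝ} (h₁ : 1 / 4 < s) (h₂ : s < 3 / 4) : 1 / 4 < ‖(s : 𝕋)‖ := by
  rw [UnitAddCircle.norm_eq]
  rcases le_or_gt (round s) 0 with h | h
  · have : (round s : ℝ) ≤ 0 := by exact_mod_cast h
    exact lt_abs.2 (Or.inl (by linarith))
  · have : (1 : ℝ) ≤ round s := by exact_mod_cast h
    exact lt_abs.2 (Or.inr (by linarith))

lemma zsmul_coe_inv_natCast_eq_zero {a : ℤ} {N : ℕ} (h : (N : ℤ) ∣ a) :
    a • (((N : ℝ)⁻¹ : ℝ) : 𝕋) = 0 := by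
  obtain ⟨k, rfl⟩ := h
  rw [← AddCircle.coe_zsmul, zsmul_eq_mul]
  rcases eq_or_ne N 0 with rfl | hN
  · simp
  · rw [Int.cast_mul, Int.cast_natCast, mul_comm, ← mul_assoc,
      inv_mul_cancel₀ (by exact_mod_cast hN), one_mul]
    exact coe_intCast_eq_zero k

lemma norm_zsmul_coe_inv_natCast_le {a : ℤ} {N : ℕ} (h : 4 * |a| ≤ N) :
    ‖a • (((N : ℝ)⁻¹ : ℝ) : 𝕋)‖ ≤ 1 / 4 := by
  rw [← AddCircle.coe_zsmul, zsmul_eq_mul]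
  refine QuotientAddGroup.norm_mk_le_norm.trans ?_
  rcases eq_or_ne N 0 with rfl | hN
  · simp
  · have hN' : (0 : ℝ) < N := by positivity
    rw [Real.norm_eq_abs, abs_mul, abs_inv, Nat.abs_cast, ← div_eq_mul_inv, div_le_iff₀ hN']
    have : (4 : ℝ) * |(a : ℝ)| ≤ N := by exact_mod_cast h
    linarith

lemma zsmulAddGroupHom_mem_polar_Xset {b : ℕ → ℕ} {m : ℤ}
    (h : ∀ n, ‖m • (((b n : ℝ)⁻¹ : ℝ) : 𝕋)‖ ≤ 1 / 4) : zsmulAddGroupHom m ∈ polar 𝕋 (Xset b) := by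
  refine ⟨continuous_zsmul m, ?_⟩
  rintro x (rfl | ⟨n, rfl | rfl⟩) <;> rw [mem_Tplus_iff_norm_le]
  · simp
  · exact h n
  · simpa using h n

lemma norm_zsmul_le_of_mem_qcHull {b : ℕ → ℕ} {x : 𝕋} (hx : x ∈ qcHull 𝕋 (Xset b)) {m : ℤ}
    (h : ∀ n, ‖m • (((b n : ℝ)⁻¹ : ℝ) : 𝕋)‖ ≤ 1 / 4) : ‖m • x‖ ≤ 1 / 4 :=
  mem_Tplus_iff_norm_le.1 (hx _ (zsmulAddGroupHom_mem_polar_Xset h))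

section PartialProd

variable (q : ℕ → ℕ)

def partialProd (k : ℕ) : ℕ := ∏ i ∈ Finset.range k, q i

lemma partialProd_zero : partialProd q 0 = 1 := rfl

lemma partialProd_succ (k : ℕ) : partialProd q (k + 1) = partialProd q k * q k :=
  Finset.prod_range_succ _ _

lemma partialProd_dvd_partialProd {k l : ℕ} (h : k ≤ l) : partialProd q k ∣ partialProd q l :=
  Finset.prod_dvd_prod_of_subset _ _ _ (Finset.range_subset_range.2 h)

variable {q} (hq : ∀ n, 0 < q n)
include hq

lemma partialProd_pos (k : ℕ) : 0 < partialProd q k :=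
  Finset.prod_pos fun i _ => hq i

lemma partialProd_mono {k l : ℕ} (h : k ≤ l) : partialProd q k ≤ partialProd q l :=
  Nat.le_of_dvd (partialProd_pos hq l) (partialProd_dvd_partialProd q h)

lemma norm_zsmul_coe_inv_partialProd_le {a : ℤ} {k : ℕ} (hdvd : (partialProd q k : ℤ) ∣ a)
    (hle : 4 * |a| ≤ partialProd q (k + 1)) (n : ℕ) :
    ‖a • (((partialProd q n : ℝ)⁻¹ : ℝ) : 𝕋)‖ ≤ 1 / 4 := by
  rcases le_or_gt n k with hn | hn
  · rw [zsmul_coe_inv_natCast_eq_zero ((Int.natCast_dvd_natCast.2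
      (partialProd_dvd_partialProd q hn)).trans hdvd), norm_zero]
    norm_num
  · exact norm_zsmul_coe_inv_natCast_le (hle.trans (by exact_mod_cast partialProd_mono hq hn))

lemma norm_add_zsmul_coe_inv_partialProd_le {a₁ a₂ : ℤ} {i j : ℕ} (hij : i < j)
    (hdvd₁ : (partialProd q i : ℤ) ∣ a₁) (hle₁ : 4 * |a₁| ≤ partialProd q (i + 1))
    (hdvd₂ : (partialProd q j : ℤ) ∣ a₂) (hle₂ : 4 * |a₂| + partialProd q j ≤ partialProd q (j + 1))
    (n : ℕ) : ‖(a₁ + a₂) • (((partialProd q n : ℝ)⁻¹ : ℝ) : 𝕋)‖ ≤ 1 / 4 := by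
  rcases le_or_gt n j with hn | hn
  · rw [add_zsmul, zsmul_coe_inv_natCast_eq_zero ((Int.natCast_dvd_natCast.2
      (partialProd_dvd_partialProd q hn)).trans hdvd₂), add_zero]
    exact norm_zsmul_coe_inv_partialProd_le hq hdvd₁ hle₁ n
  · refine norm_zsmul_coe_inv_natCast_le ?_
    have hij' : (partialProd q (i + 1) : ℤ) ≤ partialProd q j := by
      exact_mod_cast partialProd_mono hq hij
    have hjn : (partialProd q (j + 1) : ℤ) ≤ partialProd q n := by
      exact_mod_cast partialProd_mono hq hn
    linarith [abs_add_le a₁ a₂]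

end PartialProd

lemma eq_zero_of_two_mul_abs_le_abs_succ {θ : ℕ → ℝ} {B : ℝ} (K : ℕ)
    (hgrow : ∀ k, K ≤ k → 2 * |θ k| ≤ |θ (k + 1)|) (hbdd : ∀ k, |θ k| ≤ B) : θ K = 0 := by
  have hpow : ∀ j, 2 ^ j * |θ K| ≤ |θ (K + j)| := by
    intro j
    induction j with
    | zero => simp
    | succ j ih =>
      calc 2 ^ (j + 1) * |θ K| = 2 * (2 ^ j * |θ K|) := by ring
        _ ≤ 2 * |θ (K + j)| := by linarith
        _ ≤ |θ (K + j + 1)| := hgrow _ (by omega)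
  by_contra hK
  have hpos : 0 < |θ K| := abs_pos.2 hK
  obtain ⟨j, hj⟩ := pow_unbounded_of_one_lt (B / |θ K|) one_lt_two
  rw [div_lt_iff₀ hpos] at hj
  linarith [hpow j, hbdd (K + j)]

section Digits

variable (q : ℕ → ℕ) (r : ℝ)

def theta (k : ℕ) : ℝ := partialProd q k * r - round (partialProd q k * r)

def digit (k : ℕ) : ℤ := round (partialProd q (k + 1) * r) - q k * round (partialProd q k * r)

lemma coe_theta (k : ℕ) : (theta q r k : 𝕋) = partialProd q k • (r : 𝕋) := by
  rw [theta, AddCircle.coe_sub, coe_intCast_eq_zero, sub_zero, ← nsmul_eq_mul, AddCircle.coe_nsmul]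

lemma abs_theta (k : ℕ) : |theta q r k| = ‖partialProd q k • (r : 𝕋)‖ := by
  rw [← AddCircle.coe_nsmul, UnitAddCircle.norm_eq, nsmul_eq_mul, theta]

lemma mul_theta (k : ℕ) : q k * theta q r k = theta q r (k + 1) + digit q r k := by
  simp only [theta, digit, partialProd_succ]
  push_cast
  ring

lemma theta_eq_partialProd_mul {n : ℕ} (h : ∀ k < n, digit q r k = 0) :
    theta q r n = partialProd q n * theta q r 0 := by
  induction n with
  | zero => simp [partialProd_zero]
  | succ n ih =>
    have hstep := mul_theta q r n
    rw [h n n.lt_succ_self, Int.cast_zero, add_zero] at hstep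
    rw [← hstep, ih fun k hk => h k (by omega), partialProd_succ]
    push_cast
    ring

variable {q r} (hq : ∀ n, 8 ≤ q n)
  (hH : ∀ m : ℤ, (∀ n, ‖m • (((partialProd q n : ℝ)⁻¹ : ℝ) : 𝕋)‖ ≤ 1 / 4) → ‖m • (r : 𝕋)‖ ≤ 1 / 4)
include hq hH

lemma div_four_mul_abs_theta_le (k : ℕ) : (q k / 4 : ℕ) * |theta q r k| ≤ 1 / 4 := by
  rw [abs_theta]
  refine AddCircle.mul_norm_le_of_forall_norm_nsmul_le fun c _ hc => ?_
  rw [smul_smul, ← natCast_zsmul]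
  refine hH _ (norm_zsmul_coe_inv_partialProd_le (fun n => by linarith [hq n]) (k := k) ?_ ?_)
  · exact ⟨c, by push_cast; ring⟩
  · rw [partialProd_succ]
    have : 4 * c ≤ q k := by omega
    rw [abs_of_nonneg (by positivity)]
    push_cast
    nlinarith

lemma abs_theta_le (k : ℕ) : |theta q r k| ≤ 1 / 8 := by
  have h := div_four_mul_abs_theta_le hq hH k
  have hk : (2 : ℝ) ≤ (q k / 4 : ℕ) := by exact_mod_cast (by have := hq k; omega : 2 ≤ q k / 4)
  nlinarith [abs_nonneg (theta q r k)]

lemma mul_abs_theta_le_eleven_eighths (k : ℕ) : q k * |theta q r k| ≤ 11 / 8 := by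
  have h := div_four_mul_abs_theta_le hq hH k
  have hk : 2 * (q k : ℝ) ≤ 11 * (q k / 4 : ℕ) := by
    exact_mod_cast (by have := hq k; omega : 2 * q k ≤ 11 * (q k / 4))
  nlinarith [abs_nonneg (theta q r k)]

lemma abs_digit_le_one (k : ℕ) : |digit q r k| ≤ 1 := by
  have hd : (digit q r k : ℝ) = q k * theta q r k - theta q r (k + 1) := by
    rw [mul_theta]; ring
  have hlt : |(digit q r k : ℝ)| < 2 := by
    rw [hd]
    calc |q k * theta q r k - theta q r (k + 1)| ≤ |q k * theta q r k| + |theta q r (k + 1)| :=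
          abs_sub _ _
      _ ≤ 11 / 8 + 1 / 8 := by
          rw [abs_mul, Nat.abs_cast]
          linarith [mul_abs_theta_le_eleven_eighths hq hH k, abs_theta_le hq hH (k + 1)]
      _ < 2 := by norm_num
  have : |digit q r k| < 2 := by exact_mod_cast hlt
  omega

lemma digit_eq_one_or_eq_neg_one {k : ℕ} (hk : digit q r k ≠ 0) :
    digit q r k = 1 ∨ digit q r k = -1 := by
  have := abs_digit_le_one hq hH k
  rw [abs_le] at this
  omega

lemma abs_digit_mul_le (k c : ℕ) :
    |digit q r k * c * partialProd q k| ≤ c * partialProd q k := by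
  rw [abs_mul, abs_mul, Nat.abs_cast, Nat.abs_cast, mul_assoc]
  exact mul_le_of_le_one_left (by positivity) (abs_digit_le_one hq hH k)

/-- For `d k = ±1`, `q k * (d k * θ k) = d k * θ (k+1) + 1 ∈ [7/8, 9/8]`. -/
lemma digit_mul_theta_bounds {k : ℕ} (hk : digit q r k ≠ 0) {a b c : ℕ}
    (hab : a * q k ≤ b * c) (hc : 4 * c ≤ q k) :
    7 / 8 * a ≤ b * (c * (digit q r k * theta q r k)) ∧
      4 * (c * (digit q r k * theta q r k)) ≤ 9 / 8 := by
  obtain ⟨hsq, hnext⟩ : (digit q r k : ℝ) * digit q r k = 1 ∧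
      |(digit q r k : ℝ) * theta q r (k + 1)| ≤ 1 / 8 := by
    rcases digit_eq_one_or_eq_neg_one hq hH hk with h | h <;>
      simpa [h] using abs_theta_le hq hH (k + 1)
  have hq' : q k * (digit q r k * theta q r k) = digit q r k * theta q r (k + 1) + 1 := by
    rw [mul_left_comm, mul_theta, mul_add, hsq]
  have hab' : (a : ℝ) * q k ≤ b * c := by exact_mod_cast hab
  have hc' : 4 * (c : ℝ) ≤ q k := by exact_mod_cast hc
  have hpos : 0 ≤ (digit q r k : ℝ) * theta q r k := by
    have : (0 : ℝ) < q k := by exact_mod_cast (by linarith [hq k] : 0 < q k)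
    nlinarith [abs_le.1 hnext]
  constructor <;> nlinarith [abs_le.1 hnext]

/-- With `C₁ = ⌊q i / 4⌋`, `C₂ = ⌊(q j - 1) / 4⌋` and `m = dᵢ C₁ Nᵢ + dⱼ C₂ Nⱼ`, the character `m`
lies in the polar of `X`, while `m • x` is `C₁ |θ i| + C₂ |θ j| ∈ [7/44 + 7/64, 9/16]` mod 1. -/
lemma digit_eq_zero_of_lt {i j : ℕ} (hij : i < j) (hi : digit q r i ≠ 0) : digit q r j = 0 := by
  by_contra hj
  set C₁ := q i / 4
  set C₂ := (q j - 1) / 4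
  have hqi := hq i
  have hqj := hq j
  set s : ℝ := C₁ * (digit q r i * theta q r i) + C₂ * (digit q r j * theta q r j)
  set m : ℤ := digit q r i * C₁ * partialProd q i + digit q r j * C₂ * partialProd q j
  have hms : m • (r : 𝕋) = (s : 𝕋) := by
    have : (m : ℝ) * r = s + ((digit q r i * C₁ * round (partialProd q i * r) +
        digit q r j * C₂ * round (partialProd q j * r) : ℤ) : ℝ) := by
      simp only [s, m, theta]
      push_cast
      ring
    rw [← AddCircle.coe_zsmul, zsmul_eq_mul, this, AddCircle.coe_add, coe_intCast_eq_zero, add_zero]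
  have hm : ‖m • (r : 𝕋)‖ ≤ 1 / 4 := by
    have hNi : (0 : ℤ) ≤ partialProd q i := by positivity
    have hNj : (0 : ℤ) ≤ partialProd q j := by positivity
    have hCi : 4 * (C₁ : ℤ) ≤ q i := by omega
    have hCj : 4 * (C₂ : ℤ) + 1 ≤ q j := by omega
    refine hH m (norm_add_zsmul_coe_inv_partialProd_le (fun n => by linarith [hq n]) hij
      ⟨digit q r i * C₁, by ring⟩ ?_ ⟨digit q r j * C₂, by ring⟩ ?_) <;>
      rw [partialProd_succ] <;> push_cast
    · nlinarith [abs_digit_mul_le hq hH i C₁]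
    · nlinarith [abs_digit_mul_le hq hH j C₂]
  obtain ⟨hi₁, hi₂⟩ := digit_mul_theta_bounds hq hH hi (a := 2) (b := 11) (c := C₁)
    (by omega) (by omega)
  obtain ⟨hj₁, hj₂⟩ := digit_mul_theta_bounds hq hH hj (a := 1) (b := 8) (c := C₂)
    (by omega) (by omega)
  norm_num at hi₁ hj₁
  have := quarter_lt_norm_coe (s := s) (by linarith) (by linarith)
  rw [← hms] at this
  linarith

lemma coe_eq_zero_or_eq_inv_partialProd :
    (r : 𝕋) = 0 ∨ ∃ n, (r : 𝕋) = (((partialProd q (n + 1) : ℝ)⁻¹ : ℝ) : 𝕋) ∨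
      (r : 𝕋) = -(((partialProd q (n + 1) : ℝ)⁻¹ : ℝ) : 𝕋) := by
  have hr : (r : 𝕋) = (theta q r 0 : 𝕋) := by rw [coe_theta, partialProd_zero, one_smul]
  have htail : ∀ K, (∀ k, K ≤ k → digit q r k = 0) → theta q r K = 0 := by
    refine fun K hK => eq_zero_of_two_mul_abs_le_abs_succ K (fun k hk => ?_) (abs_theta_le hq hH)
    have hstep := mul_theta q r k
    rw [hK k hk, Int.cast_zero, add_zero] at hstep
    rw [← hstep, abs_mul, Nat.abs_cast]
    gcongr
    exact_mod_cast (by linarith [hq k] : 2 ≤ q k)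
  by_cases h : ∀ k, digit q r k = 0
  · left
    rw [hr, htail 0 fun k _ => h k, AddCircle.coe_zero]
  obtain ⟨i, hi⟩ := not_forall.1 h
  have hθ : (partialProd q (i + 1) : ℝ) * theta q r 0 = digit q r i := by
    have hprev : theta q r i = partialProd q i * theta q r 0 :=
      theta_eq_partialProd_mul q r fun k hk => by
        by_contra hk'
        exact hi (digit_eq_zero_of_lt hq hH hk hk')
    have hnext : theta q r (i + 1) = 0 :=
      htail (i + 1) fun k hk => digit_eq_zero_of_lt hq hH (by omega) hi
    calc (partialProd q (i + 1) : ℝ) * theta q r 0 = q i * theta q r i := by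
          rw [hprev, partialProd_succ]; push_cast; ring
      _ = digit q r i := by rw [mul_theta, hnext, zero_add]
  have hN : (partialProd q (i + 1) : ℝ) ≠ 0 := by
    exact_mod_cast (partialProd_pos (fun n => by linarith [hq n]) (i + 1)).ne'
  rw [← eq_inv_mul_iff_mul_eq₀ hN, mul_comm] at hθ
  right
  refine ⟨i, ?_⟩
  rw [hr, hθ, ← AddCircle.coe_neg]
  rcases digit_eq_one_or_eq_neg_one hq hH hi with h | h <;> simp [h]

end Digits

/-- Theorem 8T: if `q_n ≥ 8` for all `n` and `b_n = q_0 ⋯ q_n`,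
then `X = {0} ∪ {±1/b_n}` is quasi-convex in `𝕋`. -/
theorem stmt10 (q : ℕ → ℕ) (hq : ∀ n, 8 ≤ q n)
    (b : ℕ → ℕ) (hb : ∀ n, b n = ∏ i ∈ Finset.range (n + 1), q i) :
    qcHull 𝕋 (Xset b) = Xset b := by
  refine Set.Subset.antisymm (fun x hx => ?_) (fun x hx χ hχ => hχ.2 x hx)
  obtain ⟨r, rfl⟩ := QuotientAddGroup.mk_surjective x
  have hH : ∀ m : ℤ, (∀ n, ‖m • (((partialProd q n : ℝ)⁻¹ : ℝ) : 𝕋)‖ ≤ 1 / 4) →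
      ‖m • (r : 𝕋)‖ ≤ 1 / 4 :=
    fun m hm => norm_zsmul_le_of_mem_qcHull hx fun n => by rw [hb n]; exact hm (n + 1)
  rcases coe_eq_zero_or_eq_inv_partialProd hq hH with h | ⟨n, h⟩
  · exact Or.inl h
  · exact Or.inr ⟨n, by rw [hb n]; exact h⟩
end
end

section
/- Let {q_n} be positive integers, b_n = q_0···q_n (b_{-1} = 1), and X = {0} ∪ {±(1/b_n mod 1) | n ∈ ℕ} ⊆ T. For indices k₁ < k₂, the character of T given by t ↦ ([q_{k₁}/4]·b_{k₁−1} ± ⌊q_{k₂}/4⌋·b_{k₂−1})·t maps X into T₊, where [x] = max{n ∈ ℤ : n ≤ x} and ⌊x⌋ = max{n ∈ ℤ : n < x}. -/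
/-!
Write the multiplier as `m = a·B k₁ + ε·c·B k₂` with `0 ≤ 4a ≤ q k₁` and `0 ≤ 4c < q k₂`.
It suffices that `m / B j` lies within `1/4` of an integer for every `j`. For `j ≤ k₁` it is
an integer. For `k₁ < j ≤ k₂` it is congruent to `a·B k₁ / B j ∈ [0, a / q k₁] ⊆ [0, 1/4]`,
since `B j` divides `B k₂` and `B j ≥ q k₁·B k₁`. For `j > k₂` no reduction is needed:
`4|m| ≤ q k₁·B k₁ + 4c·B k₂ ≤ (1 + 4c)·B k₂ ≤ q k₂·B k₂ = B (k₂ + 1) ≤ B j`.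
-/

open Filter Topology

noncomputable section

lemma zero_mem_Tplus : (0 : 𝕋) ∈ Tplus := ⟨0, by norm_num, by simp⟩

lemma neg_mem_Tplus {x : 𝕋} (hx : x ∈ Tplus) : -x ∈ Tplus := by
  obtain ⟨r, hr, rfl⟩ := hx
  exact ⟨-r, by rwa [abs_neg], by simp⟩

lemma zsmul_inv_mem_Tplus {m z : ℤ} {b : ℕ} (hb : 0 < b) (h : 4 * |m - z * b| ≤ b) :
    m • (((b : ℝ)⁻¹ : ℝ) : 𝕋) ∈ Tplus := by
  have hbR : (0 : ℝ) < b := by exact_mod_cast hb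
  refine ⟨(m - z * b) / b, ?_, ?_⟩
  · rw [abs_div, abs_of_pos hbR, div_le_iff₀ hbR]
    have : (4 * |(m : ℝ) - z * b| : ℝ) ≤ b := by exact_mod_cast h
    linarith
  · have : ((m - z * b) / b : ℝ) = m • (b : ℝ)⁻¹ + (-z) • (1 : ℝ) := by
      simp only [zsmul_eq_mul]
      push_cast
      field_simp
      ring
    rw [this, AddCircle.coe_add, AddCircle.coe_zsmul, AddCircle.coe_zsmul,
      AddCircle.coe_period, smul_zero, add_zero]

lemma zsmul_mem_Tplus_of_Xset {b : ℕ → ℕ} {m : ℤ}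
    (h : ∀ n, m • (((b n : ℝ)⁻¹ : ℝ) : 𝕋) ∈ Tplus) : ∀ x ∈ Xset b, m • x ∈ Tplus := by
  rintro x (rfl | ⟨n, rfl | rfl⟩)
  · rw [smul_zero]
    exact zero_mem_Tplus
  · exact h n
  · rw [smul_neg]
    exact neg_mem_Tplus (h n)

lemma floor_div_four_bounds (q : ℕ) :
    0 ≤ ⌊(q : ℝ) / 4⌋ ∧ 4 * ⌊(q : ℝ) / 4⌋ ≤ q := by
  refine ⟨Int.floor_nonneg.mpr (by positivity), ?_⟩
  have := Int.floor_le ((q : ℝ) / 4)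
  have : (4 * ⌊(q : ℝ) / 4⌋ : ℝ) ≤ q := by linarith
  exact_mod_cast this

lemma ceil_div_four_sub_one_bounds {q : ℕ} (hq : 0 < q) :
    0 ≤ ⌈(q : ℝ) / 4⌉ - 1 ∧ 4 * (⌈(q : ℝ) / 4⌉ - 1) < q := by
  refine ⟨sub_nonneg.mpr (Int.one_le_ceil_iff.mpr (by positivity)), ?_⟩
  have := Int.ceil_lt_add_one ((q : ℝ) / 4)
  have : (4 * (⌈(q : ℝ) / 4⌉ - 1) : ℝ) < q := by linarith
  exact_mod_cast this

section

variable {q B : ℕ → ℕ} (hq : ∀ n, 0 < q n) (hB : ∀ n, B (n + 1) = B n * q n)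
include hB

lemma dvd_of_le_of_succ_eq_mul {k j : ℕ} (h : k ≤ j) : B k ∣ B j :=
  Nat.rel_of_forall_rel_succ_of_le (· ∣ ·) (f := B) (fun n => Dvd.intro _ (hB n).symm) h

include hq

lemma monotone_of_succ_eq_mul : Monotone B :=
  monotone_nat_of_le_succ fun n => hB n ▸ Nat.le_mul_of_pos_right _ (hq n)

lemma mul_le_of_lt_of_succ_eq_mul {k j : ℕ} (h : k < j) : B k * q k ≤ B j :=
  hB k ▸ monotone_of_succ_eq_mul hq hB h

variable {k₁ k₂ : ℕ} (hk : k₁ < k₂) {a c ε : ℤ} (ha : 0 ≤ a) (ha4 : 4 * a ≤ q k₁)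
  (hc : 0 ≤ c) (hc4 : 4 * c < q k₂)
include hk ha ha4 hc hc4

lemma four_mul_abs_le (hε : |ε| = 1) :
    4 * |a * B k₁ + ε * (c * B k₂)| ≤ B (k₂ + 1) := by
  have h₁ : ((B k₁ * q k₁ : ℕ) : ℤ) ≤ B k₂ := by
    exact_mod_cast mul_le_of_lt_of_succ_eq_mul hq hB hk
  have h₂ : |ε * (c * B k₂)| = c * B k₂ := by
    rw [abs_mul, hε, one_mul, abs_of_nonneg (by positivity)]
  calc 4 * |a * B k₁ + ε * (c * B k₂)|
      ≤ 4 * (a * B k₁) + 4 * (c * B k₂) := by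
        have := abs_add_le (a * (B k₁ : ℤ)) (ε * (c * B k₂))
        rw [abs_of_nonneg (show 0 ≤ a * (B k₁ : ℤ) by positivity), h₂] at this
        linarith
    _ ≤ B k₂ + 4 * c * B k₂ := by
        push_cast at h₁
        nlinarith
    _ ≤ B k₂ * q k₂ := by nlinarith
    _ = B (k₂ + 1) := by rw [hB]; push_cast; ring

lemma exists_four_mul_abs_sub_mul_le (hε : |ε| = 1) (j : ℕ) :
    ∃ z : ℤ, 4 * |a * B k₁ + ε * (c * B k₂) - z * B j| ≤ B j := by
  rcases le_or_gt j k₂ with hj₂ | hj₂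
  · obtain ⟨d₂, hd₂⟩ : (B j : ℤ) ∣ B k₂ :=
      Int.natCast_dvd_natCast.mpr (dvd_of_le_of_succ_eq_mul hB hj₂)
    rcases le_or_gt j k₁ with hj₁ | hj₁
    · obtain ⟨d₁, hd₁⟩ : (B j : ℤ) ∣ B k₁ :=
        Int.natCast_dvd_natCast.mpr (dvd_of_le_of_succ_eq_mul hB hj₁)
      exact ⟨a * d₁ + ε * (c * d₂), by rw [hd₁, hd₂]; ring_nf; simp⟩
    · refine ⟨ε * (c * d₂), ?_⟩
      have h₁ : ((B k₁ * q k₁ : ℕ) : ℤ) ≤ B j := by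
        exact_mod_cast mul_le_of_lt_of_succ_eq_mul hq hB hj₁
      push_cast at h₁
      rw [hd₂, show a * B k₁ + ε * (c * (B j * d₂)) - ε * (c * d₂) * B j = a * B k₁ by ring,
        abs_of_nonneg (by positivity)]
      nlinarith
  · have h := four_mul_abs_le hq hB hk ha ha4 hc hc4 hε
    have hmono : ((B (k₂ + 1) : ℕ) : ℤ) ≤ B j := by
      exact_mod_cast monotone_of_succ_eq_mul hq hB hj₂
    exact ⟨0, by simpa using h.trans hmono⟩

end

/-- for `k₁ < k₂`, the character
`[q_{k₁}/4]·η_{k₁} ± ⌊q_{k₂}/4⌋·η_{k₂}` lies in `X^▷`, where `[x]` is the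
usual floor and `⌊x⌋ = max{n ∈ ℤ | n < x} = ⌈x⌉ - 1` is the strict floor.
Here `B k = b_{k-1}` (with `b_{-1} = 1`) and `η_k(t) = b_{k-1}·t`. -/
theorem stmt12 (q : ℕ → ℕ) (hq : ∀ n, 0 < q n)
    (B : ℕ → ℕ) (hB0 : B 0 = 1) (hB : ∀ n, B (n + 1) = B n * q n)
    (k₁ k₂ : ℕ) (hk : k₁ < k₂) (ε : ℤ) (hε : ε = 1 ∨ ε = -1) :
    ∀ x ∈ Xset (fun n => B (n + 1)),
      (⌊(q k₁ : ℝ) / 4⌋ * (B k₁ : ℤ) + ε * ((⌈(q k₂ : ℝ) / 4⌉ - 1) * (B k₂ : ℤ))) • x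
        ∈ Tplus := by
  obtain ⟨ha, ha4⟩ := floor_div_four_bounds (q k₁)
  obtain ⟨hc, hc4⟩ := ceil_div_four_sub_one_bounds (hq k₂)
  have hε : |ε| = 1 := by rcases hε with rfl | rfl <;> rfl
  have hBpos (n : ℕ) : 0 < B n :=
    (hB0 ▸ Nat.one_pos : 0 < B 0).trans_le (monotone_of_succ_eq_mul hq hB n.zero_le)
  refine zsmul_mem_Tplus_of_Xset fun n => ?_
  obtain ⟨z, hz⟩ := exists_four_mul_abs_sub_mul_le hq hB hk ha ha4 hc hc4 hε (n + 1)
  exact zsmul_inv_mem_Tplus (hBpos (n + 1)) hz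
end
end
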